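/- Let k be a field of characteristic different from 2 and let H(2) be the two-dimensional quasi-Hopf algebra described below. Then: (a) t = 1 + g is a non-zero left integral and a non-zero right integral in H(2), so H(2) is unimodular; and (b) the space of left cointegrals on H(2) is k·P_g, where {P₁, P_g} is the dual basis of the basis {1, g}. -/

import Mathlib

/-!
Everything in `H(2)` is expressed through the idempotent `p₋ = (1 - g)/2`, which satisfies
`g p₋ = p₋ g = -p₋`, `S(p₋) = p₋` and `ε(p₋) = 0`. Expanding the defining formulas gives
`p_R = f = f⁻¹ = 1 ⊗ 1 - 2 p₋ ⊗ p₋` and `q_R = 1 ⊗ g + 2 p₋ ⊗ p₋`, hence `U = g ⊗ 1` and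
`V = 1 ⊗ 1`. Since `1 + g` is a nonzero two-sided integral, `μ = ε`, and then `ε(p₋) = 0`
reduces the right-hand side of the cointegral identity to `λ(h)·1`, while the left-hand side is
`λ(h₂) h₁ g`. Both sides are linear in `h`; for `h = g` they agree, and for `h = 1` they read
`λ(1) g = λ(1) 1`. So `λ` is a left cointegral iff `λ(1) = 0`, i.e. `λ ∈ k·P_g`.
-/

open TensorProduct

namespace QuasiHopfPaper

variable {k H : Type} [Field k] [Ring H] [Algebra k H]

/-- Left contraction: on `a ⊗ b` gives `φ a • b`. -/
noncomputable def lctr (φ : H →ₗ[k] k) : H ⊗[k] H →ₗ[k] H :=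
  (TensorProduct.lid k H).toLinearMap ∘ₗ TensorProduct.map φ LinearMap.id

/-- Right contraction: on `a ⊗ b` gives `φ b • a`. -/
noncomputable def rctr (φ : H →ₗ[k] k) : H ⊗[k] H →ₗ[k] H :=
  (TensorProduct.rid k H).toLinearMap ∘ₗ TensorProduct.map LinearMap.id φ

/-- On `a ⊗ (b ⊗ c)` gives `φ a • ψ b • c`. -/
noncomputable def c12 (φ ψ : H →ₗ[k] k) : H ⊗[k] (H ⊗[k] H) →ₗ[k] H :=
  (TensorProduct.lid k H).toLinearMap ∘ₗ TensorProduct.map φ (lctr ψ)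

/-- On `x ⊗ y` (with `x y : H ⊗ H`) gives `x * M * y`. -/
noncomputable def sandwichMid (M : H ⊗[k] H) :
    (H ⊗[k] H) ⊗[k] (H ⊗[k] H) →ₗ[k] H ⊗[k] H :=
  LinearMap.mul' k (H ⊗[k] H) ∘ₗ TensorProduct.map LinearMap.id (LinearMap.mulLeft k M)

/-- The permutation `a ⊗ (b ⊗ c) ↦ c ⊗ (b ⊗ a)`. -/
noncomputable def perm321 : H ⊗[k] (H ⊗[k] H) →ₗ[k] H ⊗[k] (H ⊗[k] H) :=
  (TensorProduct.map LinearMap.id (TensorProduct.comm k H H).toLinearMap) ∘ₗ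
  (TensorProduct.assoc k H H H).toLinearMap ∘ₗ
  (TensorProduct.map (TensorProduct.comm k H H).toLinearMap LinearMap.id) ∘ₗ
  (TensorProduct.assoc k H H H).symm.toLinearMap ∘ₗ
  (TensorProduct.map LinearMap.id (TensorProduct.comm k H H).toLinearMap)

/-- The data of a quasi-bialgebra with antipode-data over a field `k`:
comultiplication, counit, reassociator and its inverse, antipode `S` and its inverse,
the distinguished elements `α`, `β`, and the modular element `mod` of the dual. -/
structure QHData (k H : Type) [Field k] [Ring H] [Algebra k H] where
  comul : H →ₐ[k] H ⊗[k] H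
  counit : H →ₐ[k] k
  Phi : H ⊗[k] (H ⊗[k] H)
  PhiInv : H ⊗[k] (H ⊗[k] H)
  S : H →ₗ[k] H
  Sinv : H →ₗ[k] H
  alpha : H
  beta : H
  mod : H →ₐ[k] k

namespace QHData

variable (Q : QHData k H)

noncomputable def com : H →ₗ[k] H ⊗[k] H := Q.comul.toLinearMap
noncomputable def cou : H →ₗ[k] k := Q.counit.toLinearMap
noncomputable def mu : H →ₗ[k] k := Q.mod.toLinearMap

/-- `(S ⊗ S) ∘ (swap)`. -/
noncomputable def swapSS : H ⊗[k] H →ₗ[k] H ⊗[k] H :=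
  TensorProduct.map Q.S Q.S ∘ₗ (TensorProduct.comm k H H).toLinearMap

/-- On `b ⊗ c` gives `b * β * S c`. -/
noncomputable def innerPR : H ⊗[k] H →ₗ[k] H :=
  LinearMap.mul' k H ∘ₗ TensorProduct.map (LinearMap.mulRight k Q.beta) Q.S

/-- `p_R = x¹ ⊗ x²βS(x³)`. -/
noncomputable def pR : H ⊗[k] H := TensorProduct.map LinearMap.id Q.innerPR Q.PhiInv

/-- `q_R = X¹ ⊗ S⁻¹(αX³)X²`. -/
noncomputable def qR : H ⊗[k] H :=
  TensorProduct.map LinearMap.id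
    (LinearMap.mul' k H ∘ₗ
      TensorProduct.map (Q.Sinv ∘ₗ LinearMap.mulLeft k Q.alpha) LinearMap.id ∘ₗ
      (TensorProduct.comm k H H).toLinearMap) Q.Phi

/-- `p_L = X²S⁻¹(X¹β) ⊗ X³`. -/
noncomputable def pL : H ⊗[k] H :=
  (LinearMap.mul' k (H ⊗[k] H) ∘ₗ (TensorProduct.comm k (H ⊗[k] H) (H ⊗[k] H)).toLinearMap ∘ₗ
    TensorProduct.map ((TensorProduct.mk k H H).flip 1 ∘ₗ Q.Sinv ∘ₗ LinearMap.mulRight k Q.beta)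
      LinearMap.id) Q.Phi

/-- `q_L = S(x¹)αx² ⊗ x³`. -/
noncomputable def qL : H ⊗[k] H :=
  (LinearMap.mul' k (H ⊗[k] H) ∘ₗ
    TensorProduct.map ((TensorProduct.mk k H H).flip 1 ∘ₗ LinearMap.mulRight k Q.alpha ∘ₗ Q.S)
      LinearMap.id) Q.PhiInv

noncomputable def Mgamma : H ⊗[k] H :=
  (LinearMap.mul' k (H ⊗[k] H) ∘ₗ
    TensorProduct.map
      ((TensorProduct.mk k H H).flip Q.alpha ∘ₗ LinearMap.mulRight k Q.alpha ∘ₗ Q.S)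
      LinearMap.id) Q.PhiInv

/-- `γ = S(x¹X²)αx²X³₁ ⊗ S(X¹)αx³X³₂`. -/
noncomputable def gammaEl : H ⊗[k] H :=
  sandwichMid Q.Mgamma
    (TensorProduct.map Q.swapSS Q.com ((TensorProduct.assoc k H H H).symm Q.Phi))

noncomputable def Mdelta : H ⊗[k] H :=
  TensorProduct.map (LinearMap.mulRight k Q.beta) Q.innerPR Q.PhiInv

/-- `δ = X¹₁x¹βS(X³) ⊗ X¹₂x²βS(X²x³)`. -/
noncomputable def deltaEl : H ⊗[k] H :=
  sandwichMid Q.Mdelta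
    (TensorProduct.map Q.com Q.swapSS Q.Phi)

/-- The Drinfeld twist `f = (S⊗S)(Δᶜᵒᵖ(x¹)) γ Δ(x²βS(x³))`. -/
noncomputable def ftw : H ⊗[k] H :=
  sandwichMid Q.gammaEl
    (TensorProduct.map (Q.swapSS ∘ₗ Q.com) (Q.com ∘ₗ Q.innerPR) Q.PhiInv)

/-- The inverse Drinfeld twist `f⁻¹ = Δ(S(x¹)αx²) δ (S⊗S)(Δᶜᵒᵖ(x³))`. -/
noncomputable def finv : H ⊗[k] H :=
  sandwichMid Q.deltaEl
    (TensorProduct.map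
      (Q.com ∘ₗ (LinearMap.mul' k H ∘ₗ
        TensorProduct.map (LinearMap.mulRight k Q.alpha ∘ₗ Q.S) LinearMap.id))
      (Q.swapSS ∘ₗ Q.com) ((TensorProduct.assoc k H H H).symm Q.PhiInv))

/-- `U = g¹S(q²) ⊗ g²S(q¹)`. -/
noncomputable def Uel : H ⊗[k] H := Q.finv * Q.swapSS Q.qR

/-- `V = S⁻¹(f²p²) ⊗ S⁻¹(f¹p¹)`. -/
noncomputable def Vel : H ⊗[k] H :=
  (TensorProduct.map Q.Sinv Q.Sinv ∘ₗ (TensorProduct.comm k H H).toLinearMap) (Q.ftw * Q.pR)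

/-- `t` is a left integral: `h t = ε(h) t` for all `h`. -/
def IsLeftIntegral (t : H) : Prop := ∀ h : H, h * t = Q.counit h • t

/-- `t` is a right integral: `t h = ε(h) t` for all `h`. -/
def IsRightIntegral (t : H) : Prop := ∀ h : H, t * h = Q.counit h • t

/-- `l` is a left cointegral:
`l(V²h₂U²) V¹h₁U¹ = μ(x¹) l(h S(x²)) x³` for all `h`. -/
def IsLeftCointegral (l : H →ₗ[k] k) : Prop :=
  ∀ h : H, rctr l (Q.Vel * Q.comul h * Q.Uel)
      = c12 Q.mu (l ∘ₗ LinearMap.mulLeft k h ∘ₗ Q.S) Q.PhiInv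

/-- The co-opposite data. -/
noncomputable def cop : QHData k H where
  comul := (Algebra.TensorProduct.comm k H H).toAlgHom.comp Q.comul
  counit := Q.counit
  Phi := perm321 Q.PhiInv
  PhiInv := perm321 Q.Phi
  S := Q.Sinv
  Sinv := Q.S
  alpha := Q.Sinv Q.alpha
  beta := Q.Sinv Q.beta
  mod := Q.mod

/-- A right cointegral is a left cointegral on the co-opposite quasi-Hopf algebra. -/
def IsRightCointegral (l : H →ₗ[k] k) : Prop := Q.cop.IsLeftCointegral l

/-- `q¹t₁p¹ ⊗ q²t₂p²`. -/
noncomputable def frobE (t : H) : H ⊗[k] H := Q.qR * Q.comul t * Q.pR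

/-- The axioms of a quasi-Hopf algebra with (given) modular element. -/
structure IsQuasiHopf : Prop where
  counit_comul_left : ∀ h : H, lctr Q.cou (Q.comul h) = h
  counit_comul_right : ∀ h : H, rctr Q.cou (Q.comul h) = h
  quasi_coassoc : ∀ h : H,
    Algebra.TensorProduct.map (AlgHom.id k H) Q.comul (Q.comul h)
      = Q.Phi * (Algebra.TensorProduct.assoc k k k H H H)
          (Algebra.TensorProduct.map Q.comul (AlgHom.id k H) (Q.comul h)) * Q.PhiInv
  phi_inv : Q.Phi * Q.PhiInv = 1
  inv_phi : Q.PhiInv * Q.Phi = 1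
  cocycle :
    ((1 : H) ⊗ₜ[k] Q.Phi) *
      Algebra.TensorProduct.map (AlgHom.id k H)
        ((Algebra.TensorProduct.assoc k k k H H H).toAlgHom.comp
          (Algebra.TensorProduct.map Q.comul (AlgHom.id k H))) Q.Phi *
      TensorProduct.map LinearMap.id (TensorProduct.assoc k H H H).toLinearMap
        ((TensorProduct.assoc k H (H ⊗[k] H) H) (Q.Phi ⊗ₜ[k] (1 : H)))
    = Algebra.TensorProduct.map (AlgHom.id k H)
        (Algebra.TensorProduct.map (AlgHom.id k H) Q.comul) Q.Phi *
      (TensorProduct.assoc k H H (H ⊗[k] H))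
        (Algebra.TensorProduct.map Q.comul (AlgHom.id k (H ⊗[k] H)) Q.Phi)
  counit_phi_mid : TensorProduct.map LinearMap.id (lctr Q.cou) Q.Phi = 1
  S_one : Q.S 1 = 1
  S_antimul : ∀ a b : H, Q.S (a * b) = Q.S b * Q.S a
  Sinv_S : ∀ h : H, Q.Sinv (Q.S h) = h
  S_Sinv : ∀ h : H, Q.S (Q.Sinv h) = h
  antipode_left : ∀ h : H,
    LinearMap.mul' k H
      (TensorProduct.map (LinearMap.mulRight k Q.alpha ∘ₗ Q.S) LinearMap.id (Q.comul h))
      = Q.counit h • Q.alpha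
  antipode_right : ∀ h : H,
    LinearMap.mul' k H
      (TensorProduct.map (LinearMap.mulRight k Q.beta) Q.S (Q.comul h))
      = Q.counit h • Q.beta
  antipode_phi :
    (LinearMap.mul' k H ∘ₗ TensorProduct.map (LinearMap.mulRight k Q.beta)
      (LinearMap.mul' k H ∘ₗ
        TensorProduct.map (LinearMap.mulRight k Q.alpha ∘ₗ Q.S) LinearMap.id)) Q.Phi = 1
  antipode_phiInv :
    (LinearMap.mul' k H ∘ₗ TensorProduct.map (LinearMap.mulRight k Q.alpha ∘ₗ Q.S)
      (LinearMap.mul' k H ∘ₗ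
        TensorProduct.map (LinearMap.mulRight k Q.beta) Q.S)) Q.PhiInv = 1
  counit_alpha : Q.counit Q.alpha = 1
  counit_beta : Q.counit Q.beta = 1
  mod_prop : ∀ t : H, Q.IsLeftIntegral t → ∀ h : H, t * h = Q.mod h • t

end QHData

@[simp]
theorem sandwichMid_tmul (M x y : H ⊗[k] H) : sandwichMid M (x ⊗ₜ[k] y) = x * M * y := by
  simp [sandwichMid, mul_assoc]

@[simp]
theorem rctr_tmul (φ : H →ₗ[k] k) (a b : H) : rctr φ (a ⊗ₜ[k] b) = φ b • a := rfl

@[simp]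
theorem c12_tmul (φ ψ : H →ₗ[k] k) (a b c : H) :
    c12 φ ψ (a ⊗ₜ[k] (b ⊗ₜ[k] c)) = φ a • ψ b • c := rfl

variable (k) in
noncomputable def pMinus (g : H) : H := (2 : k)⁻¹ • (1 - g)

section pMinus

variable {g : H}

theorem mul_pMinus (hg : g * g = 1) : g * pMinus k g = -pMinus k g := by
  rw [pMinus, mul_smul_comm, mul_sub, mul_one, hg, ← smul_neg, neg_sub]

theorem pMinus_mul (hg : g * g = 1) : pMinus k g * g = -pMinus k g := by
  rw [pMinus, smul_mul_assoc, sub_mul, one_mul, hg, ← smul_neg, neg_sub]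

theorem pMinus_mul_self (h2 : (2 : k) ≠ 0) (hg : g * g = 1) :
    pMinus k g * pMinus k g = pMinus k g := by
  have : ((1 : H) - g) * (1 - g) = (2 : k) • (1 - g) := by
    rw [sub_mul, one_mul, mul_sub, mul_one, hg, two_smul]; abel
  rw [pMinus, smul_mul_smul_comm, this, smul_smul, mul_assoc, inv_mul_cancel₀ h2, mul_one]

theorem map_pMinus (f : H →ₗ[k] H) (h1 : f 1 = 1) (hg : f g = g) :
    f (pMinus k g) = pMinus k g := by
  rw [pMinus, map_smul, map_sub, h1, hg]

end pMinus

theorem _root_.Module.Basis.exists_eq_smul_coord_one_iff {M : Type} [AddCommGroup M] [Module k M]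
    (B : Module.Basis (Fin 2) k M) (l : M →ₗ[k] k) :
    (∃ c : k, l = c • B.coord 1) ↔ l (B 0) = 0 := by
  refine ⟨?_, fun h ↦ ⟨l (B 1), B.ext fun i ↦ ?_⟩⟩
  · rintro ⟨c, rfl⟩
    simp
  · fin_cases i <;> simp [h]

namespace QHData

variable (Q : QHData k H)

@[simp]
theorem swapSS_tmul (a b : H) : Q.swapSS (a ⊗ₜ[k] b) = Q.S b ⊗ₜ[k] Q.S a := rfl

@[simp]
theorem innerPR_tmul (a b : H) : Q.innerPR (a ⊗ₜ[k] b) = a * Q.beta * Q.S b := rfl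

@[simp]
theorem com_apply (h : H) : Q.com h = Q.comul h := rfl

@[simp]
theorem cou_apply (h : H) : Q.cou h = Q.counit h := rfl

theorem isLeftIntegral_of_basis {ι : Type} (B : Module.Basis ι k H) {t : H}
    (hB : ∀ i, B i * t = Q.counit (B i) • t) : Q.IsLeftIntegral t := by
  have : LinearMap.mulRight k t = Q.cou.smulRight t := B.ext hB
  exact fun h ↦ LinearMap.congr_fun this h

theorem isRightIntegral_of_basis {ι : Type} (B : Module.Basis ι k H) {t : H}
    (hB : ∀ i, t * B i = Q.counit (B i) • t) : Q.IsRightIntegral t := by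
  have : LinearMap.mulLeft k t = Q.cou.smulRight t := B.ext hB
  exact fun h ↦ LinearMap.congr_fun this h

theorem mod_eq_counit_of_isLeftIntegral_of_isRightIntegral (hQ : Q.IsQuasiHopf) {t : H}
    (hl : Q.IsLeftIntegral t) (hr : Q.IsRightIntegral t) (ht : t ≠ 0) : Q.mod = Q.counit := by
  ext h
  have : Q.mod h • t = Q.counit h • t := by rw [← hQ.mod_prop t hl h, hr h]
  exact smul_left_injective k ht this

theorem isLeftIntegral_one_add {g : H} (hg : g * g = 1) (hε : Q.counit g = 1)
    (B : Module.Basis (Fin 2) k H) (hB0 : B 0 = 1) (hB1 : B 1 = g) :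
    Q.IsLeftIntegral (1 + g) :=
  Q.isLeftIntegral_of_basis B <| by
    simp [Fin.forall_fin_two, hB0, hB1, mul_add, hg, hε, add_comm]

theorem isRightIntegral_one_add {g : H} (hg : g * g = 1) (hε : Q.counit g = 1)
    (B : Module.Basis (Fin 2) k H) (hB0 : B 0 = 1) (hB1 : B 1 = g) :
    Q.IsRightIntegral (1 + g) :=
  Q.isRightIntegral_of_basis B <| by
    simp [Fin.forall_fin_two, hB0, hB1, add_mul, hg, hε, add_comm]

structure IsH2 (g : H) : Prop where
  two_ne_zero : (2 : k) ≠ 0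
  mul_self : g * g = 1
  comul_g : Q.comul g = g ⊗ₜ[k] g
  counit_g : Q.counit g = 1
  Phi_eq : Q.Phi = 1 - (2 : k) • (pMinus k g ⊗ₜ[k] (pMinus k g ⊗ₜ[k] pMinus k g))
  PhiInv_eq : Q.PhiInv = Q.Phi
  S_one : Q.S 1 = 1
  S_g : Q.S g = g
  Sinv_one : Q.Sinv 1 = 1
  Sinv_g : Q.Sinv g = g
  alpha_eq : Q.alpha = g
  beta_eq : Q.beta = 1

namespace IsH2

variable {Q} {g : H}

theorem counit_pMinus (hH : Q.IsH2 g) : Q.counit (pMinus k g) = 0 := by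
  rw [pMinus, map_smul, map_sub, map_one, hH.counit_g, sub_self, smul_zero]

theorem comul_pMinus (hH : Q.IsH2 g) :
    Q.comul (pMinus k g) = (2 : k)⁻¹ • (1 ⊗ₜ[k] 1 - g ⊗ₜ[k] g) := by
  rw [pMinus, map_smul, map_sub, map_one, hH.comul_g, Algebra.TensorProduct.one_def]

theorem S_pMinus (hH : Q.IsH2 g) : Q.S (pMinus k g) = pMinus k g :=
  map_pMinus _ hH.S_one hH.S_g

theorem Sinv_pMinus (hH : Q.IsH2 g) : Q.Sinv (pMinus k g) = pMinus k g :=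
  map_pMinus _ hH.Sinv_one hH.Sinv_g

theorem pR_eq (hH : Q.IsH2 g) :
    Q.pR = 1 ⊗ₜ[k] 1 - (2 : k) • pMinus k g ⊗ₜ[k] pMinus k g := by
  simp only [pR, hH.PhiInv_eq, hH.Phi_eq, innerPR_tmul, LinearMap.id_coe, id_eq,
    TensorProduct.map_tmul, map_sub, map_smul, hH.S_one, hH.S_pMinus, hH.beta_eq,
    Algebra.TensorProduct.one_def, mul_one, pMinus_mul_self hH.two_ne_zero hH.mul_self]

theorem assoc_symm_Phi (hH : Q.IsH2 g) :
    (TensorProduct.assoc k H H H).symm Q.Phi =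
      (1 ⊗ₜ[k] 1) ⊗ₜ[k] 1 - (2 : k) • (pMinus k g ⊗ₜ[k] pMinus k g) ⊗ₜ[k] pMinus k g := by
  simp [hH.Phi_eq, Algebra.TensorProduct.one_def]

theorem qR_eq (hH : Q.IsH2 g) :
    Q.qR = 1 ⊗ₜ[k] g + (2 : k) • pMinus k g ⊗ₜ[k] pMinus k g := by
  simp only [qR, hH.Phi_eq, LinearMap.coe_comp, Function.comp_apply, LinearMap.mul'_apply,
    LinearEquiv.coe_coe, TensorProduct.comm_tmul, LinearMap.mulLeft_apply, LinearMap.id_coe, id_eq,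
    sub_neg_eq_add, TensorProduct.map_tmul, map_sub, map_smul, map_neg, hH.Sinv_g, hH.Sinv_pMinus,
    hH.alpha_eq, Algebra.TensorProduct.one_def, mul_one, mul_pMinus hH.mul_self,
    pMinus_mul_self hH.two_ne_zero hH.mul_self, TensorProduct.tmul_neg, TensorProduct.neg_tmul,
    smul_neg]

theorem Mgamma_eq (hH : Q.IsH2 g) :
    Q.Mgamma = g ⊗ₜ[k] g - (2 : k) • pMinus k g ⊗ₜ[k] pMinus k g := by
  simp only [Mgamma, hH.PhiInv_eq, hH.Phi_eq, LinearMap.coe_comp, Function.comp_apply,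
    LinearMap.mul'_apply, LinearMap.mulRight_apply, LinearMap.flip_apply, TensorProduct.mk_apply,
    LinearMap.id_coe, id_eq, TensorProduct.map_tmul, map_sub, map_smul, map_neg, hH.S_one,
    hH.S_pMinus, hH.alpha_eq, Algebra.TensorProduct.one_def, Algebra.TensorProduct.tmul_mul_tmul,
    mul_one, one_mul, mul_pMinus hH.mul_self, pMinus_mul hH.mul_self,
    pMinus_mul_self hH.two_ne_zero hH.mul_self, TensorProduct.tmul_neg, TensorProduct.neg_tmul,
    neg_neg]

theorem gammaEl_eq (hH : Q.IsH2 g) :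
    Q.gammaEl = g ⊗ₜ[k] g - (2 : k) • pMinus k g ⊗ₜ[k] pMinus k g := by
  simp only [gammaEl, hH.assoc_symm_Phi, hH.Mgamma_eq, sandwichMid_tmul, swapSS_tmul, com_apply,
    TensorProduct.map_tmul, map_sub, map_smul, map_one, hH.S_one, hH.S_pMinus, hH.comul_pMinus,
    Algebra.TensorProduct.one_def, Algebra.TensorProduct.tmul_mul_tmul, mul_sub, sub_mul,
    mul_smul_comm, smul_mul_assoc, mul_one, one_mul, pMinus_mul hH.mul_self,
    pMinus_mul_self hH.two_ne_zero hH.mul_self, TensorProduct.tmul_sub, TensorProduct.tmul_neg,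
    TensorProduct.neg_tmul, smul_sub, neg_neg, smul_smul]
  match_scalars <;> field_simp [hH.two_ne_zero]
  all_goals ring1

theorem ftw_eq (hH : Q.IsH2 g) :
    Q.ftw = 1 ⊗ₜ[k] 1 - (2 : k) • pMinus k g ⊗ₜ[k] pMinus k g := by
  simp only [ftw, hH.PhiInv_eq, hH.Phi_eq, hH.gammaEl_eq, sandwichMid_tmul, swapSS_tmul, com_apply,
    innerPR_tmul, LinearMap.coe_comp, Function.comp_apply, TensorProduct.map_tmul, map_sub,
    map_smul, map_one, hH.S_one, hH.S_g, hH.S_pMinus, hH.comul_pMinus, hH.beta_eq,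
    Algebra.TensorProduct.one_def, Algebra.TensorProduct.tmul_mul_tmul, mul_sub, sub_mul,
    mul_smul_comm, smul_mul_assoc, mul_one, one_mul, hH.mul_self, mul_pMinus hH.mul_self,
    pMinus_mul hH.mul_self, pMinus_mul_self hH.two_ne_zero hH.mul_self, TensorProduct.tmul_sub,
    TensorProduct.sub_tmul, TensorProduct.tmul_neg, TensorProduct.neg_tmul, smul_sub, neg_neg,
    smul_smul]
  match_scalars <;> field_simp [hH.two_ne_zero]
  all_goals ring1

theorem Mdelta_eq (hH : Q.IsH2 g) :
    Q.Mdelta = 1 ⊗ₜ[k] 1 - (2 : k) • pMinus k g ⊗ₜ[k] pMinus k g := by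
  simp only [Mdelta, hH.PhiInv_eq, hH.Phi_eq, innerPR_tmul, LinearMap.mulRight_apply,
    TensorProduct.map_tmul, map_sub, map_smul, hH.S_one, hH.S_pMinus, hH.beta_eq,
    Algebra.TensorProduct.one_def, mul_one, pMinus_mul_self hH.two_ne_zero hH.mul_self]

theorem deltaEl_eq (hH : Q.IsH2 g) :
    Q.deltaEl = 1 ⊗ₜ[k] 1 - (2 : k) • pMinus k g ⊗ₜ[k] pMinus k g := by
  simp only [deltaEl, hH.Phi_eq, hH.Mdelta_eq, sandwichMid_tmul, swapSS_tmul, com_apply,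
    TensorProduct.map_tmul, map_sub, map_smul, map_one, hH.S_one, hH.S_pMinus, hH.comul_pMinus,
    Algebra.TensorProduct.one_def, Algebra.TensorProduct.tmul_mul_tmul, mul_sub, sub_mul,
    mul_smul_comm, smul_mul_assoc, mul_one, one_mul, mul_pMinus hH.mul_self,
    pMinus_mul_self hH.two_ne_zero hH.mul_self, TensorProduct.sub_tmul, TensorProduct.tmul_neg,
    TensorProduct.neg_tmul, smul_sub, neg_neg, smul_smul]
  match_scalars <;> field_simp [hH.two_ne_zero]
  all_goals ring1

theorem finv_eq (hH : Q.IsH2 g) :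
    Q.finv = 1 ⊗ₜ[k] 1 - (2 : k) • pMinus k g ⊗ₜ[k] pMinus k g := by
  simp only [finv, hH.PhiInv_eq, hH.assoc_symm_Phi, hH.deltaEl_eq, sandwichMid_tmul, swapSS_tmul,
    com_apply, LinearMap.coe_comp, Function.comp_apply, LinearMap.mul'_apply,
    LinearMap.mulRight_apply, LinearMap.id_coe, id_eq, TensorProduct.map_tmul, map_sub, map_smul,
    map_neg, map_one, hH.S_one, hH.S_g, hH.S_pMinus, hH.comul_g, hH.comul_pMinus, hH.alpha_eq,
    Algebra.TensorProduct.one_def, Algebra.TensorProduct.tmul_mul_tmul, mul_sub, sub_mul,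
    mul_smul_comm, smul_mul_assoc, mul_one, one_mul, hH.mul_self, mul_pMinus hH.mul_self,
    pMinus_mul hH.mul_self, pMinus_mul_self hH.two_ne_zero hH.mul_self, TensorProduct.tmul_sub,
    TensorProduct.sub_tmul, TensorProduct.tmul_neg, TensorProduct.neg_tmul, smul_sub, smul_neg,
    neg_neg, smul_smul]
  match_scalars <;> field_simp [hH.two_ne_zero]
  all_goals ring1

theorem Uel_eq (hH : Q.IsH2 g) : Q.Uel = g ⊗ₜ[k] 1 := by
  simp only [Uel, hH.finv_eq, hH.qR_eq, swapSS_tmul, map_add, map_smul, hH.S_one, hH.S_g,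
    hH.S_pMinus, Algebra.TensorProduct.tmul_mul_tmul, mul_add, sub_mul, mul_smul_comm,
    smul_mul_assoc, mul_one, one_mul, pMinus_mul hH.mul_self,
    pMinus_mul_self hH.two_ne_zero hH.mul_self, TensorProduct.neg_tmul, smul_sub, smul_neg,
    smul_smul]
  match_scalars <;> field_simp [hH.two_ne_zero]
  all_goals ring1

theorem Vel_eq (hH : Q.IsH2 g) : Q.Vel = 1 ⊗ₜ[k] 1 := by
  simp only [Vel, hH.ftw_eq, hH.pR_eq, LinearMap.coe_comp, Function.comp_apply, LinearEquiv.coe_coe,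
    TensorProduct.comm_tmul, TensorProduct.map_tmul, map_sub, map_smul, hH.Sinv_one, hH.Sinv_pMinus,
    Algebra.TensorProduct.tmul_mul_tmul, mul_sub, sub_mul, mul_smul_comm, smul_mul_assoc, mul_one,
    one_mul, pMinus_mul_self hH.two_ne_zero hH.mul_self, smul_sub, smul_smul]
  match_scalars <;> field_simp [hH.two_ne_zero]
  all_goals ring1

theorem c12_cou_PhiInv (hH : Q.IsH2 g) (ψ : H →ₗ[k] k) :
    c12 Q.cou ψ Q.PhiInv = ψ 1 • 1 := by
  simp [hH.PhiInv_eq, hH.Phi_eq, Algebra.TensorProduct.one_def, hH.counit_pMinus]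

theorem isLeftCointegral_iff (hH : Q.IsH2 g) (hmod : Q.mod = Q.counit) (l : H →ₗ[k] k) :
    Q.IsLeftCointegral l ↔ ∀ h, rctr l (Q.comul h * (g ⊗ₜ[k] 1)) = l h • 1 := by
  have hmu : Q.mu = Q.cou := by rw [mu, hmod, cou]
  simp [IsLeftCointegral, hH.Vel_eq, hH.Uel_eq, hmu, hH.c12_cou_PhiInv, hH.S_one,
    ← Algebra.TensorProduct.one_def]

theorem isLeftCointegral_iff_apply_one_eq_zero (hH : Q.IsH2 g) (hmod : Q.mod = Q.counit)
    (B : Module.Basis (Fin 2) k H) (hB0 : B 0 = 1) (hB1 : B 1 = g) (l : H →ₗ[k] k) :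
    Q.IsLeftCointegral l ↔ l 1 = 0 := by
  have hg : g ≠ 1 := by
    rw [← hB0, ← hB1]
    exact B.injective.ne (by decide)
  let F : H →ₗ[k] H := rctr l ∘ₗ LinearMap.mulRight k (g ⊗ₜ[k] (1 : H)) ∘ₗ Q.com
  have hF : (∀ h, F h = l h • 1) ↔ ∀ i, F (B i) = l (B i) • 1 :=
    ⟨fun h i ↦ h (B i), fun h x ↦ LinearMap.congr_fun (B.ext (f₂ := l.smulRight 1) h) x⟩
  have hF1 : F 1 = l 1 • g := by simp [F, Algebra.TensorProduct.one_def]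
  have hFg : F g = l g • 1 := by simp [F, hH.comul_g, hH.mul_self]
  rw [hH.isLeftCointegral_iff hmod]
  refine hF.trans ?_
  rw [Fin.forall_fin_two, hB0, hB1, hF1, hFg, ← sub_eq_zero, ← smul_sub, smul_eq_zero,
    sub_eq_zero, or_iff_left hg, and_iff_left rfl]

end IsH2

theorem IsQuasiHopf.Sinv_one {Q : QHData k H} (hQ : Q.IsQuasiHopf) : Q.Sinv 1 = 1 := by
  simpa [hQ.S_one] using hQ.Sinv_S 1

/-- for the two-dimensional quasi-Hopf algebra `H(2)`:
`t = 1 + g` is a non-zero two-sided integral (so `H(2)` is unimodular), and the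
space of left cointegrals is `k·P_g`. -/
theorem stmt19 (Q : QHData k H) (hQ : Q.IsQuasiHopf)
    (hchar : (2 : k) ≠ 0)
    (g : H) (B : Module.Basis (Fin 2) k H) (hB0 : B 0 = 1) (hB1 : B 1 = g)
    (hg2 : g * g = 1)
    (hcg : Q.comul g = g ⊗ₜ[k] g) (heg : Q.counit g = 1)
    (hPhi : Q.Phi =
      1 - (2 : k) • (((2 : k)⁻¹ • ((1 : H) - g)) ⊗ₜ[k]
        (((2 : k)⁻¹ • ((1 : H) - g)) ⊗ₜ[k] ((2 : k)⁻¹ • ((1 : H) - g)))))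
    (hPhiInv : Q.PhiInv = Q.Phi)
    (hS : Q.S g = g) (hSinv : Q.Sinv g = g)
    (halpha : Q.alpha = g) (hbeta : Q.beta = 1) :
    Q.IsLeftIntegral (1 + g) ∧ Q.IsRightIntegral (1 + g) ∧ (1 : H) + g ≠ 0 ∧
    Q.mod = Q.counit ∧
    (∀ l : H →ₗ[k] k, Q.IsLeftCointegral l ↔ ∃ c : k, l = c • B.coord 1) := by
  have hH : Q.IsH2 g :=
    ⟨hchar, hg2, hcg, heg, hPhi, hPhiInv, hQ.S_one, hS, hQ.Sinv_one, hSinv, halpha, hbeta⟩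
  have hl := Q.isLeftIntegral_one_add hg2 heg B hB0 hB1
  have hr := Q.isRightIntegral_one_add hg2 heg B hB0 hB1
  have hne : (1 : H) + g ≠ 0 := by
    rw [← hB0, ← hB1]
    intro h
    simpa [Finsupp.single_apply] using congr_arg (fun x ↦ B.repr x 0) h
  have hmod := Q.mod_eq_counit_of_isLeftIntegral_of_isRightIntegral hQ hl hr hne
  refine ⟨hl, hr, hne, hmod, fun l ↦ ?_⟩
  rw [hH.isLeftCointegral_iff_apply_one_eq_zero hmod B hB0 hB1, ← hB0,
    B.exists_eq_smul_coord_one_iff]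

end QHData
end QuasiHopfPaper
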